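/- arXiv:1505.06503 — 5 statements merged into one kernel-verified Lean document; each statement's English description precedes it below -/
import Mathlib

section
/- The number of monotone sequences of m transpositions in the symmetric group S_d (i.e., sequences σ_1,...,σ_m with σ_i = (r_i s_i), r_i < s_i, and s_1 ≤ s_2 ≤ ... ≤ s_m) equals the Stirling number of the second kind S(d+m-1, d-1), for d ≥ 1 and m ≥ 0. -/
/-- Stirling numbers of the second kind: `stirling N K` counts partitions of an
`N`-element set into `K` nonempty blocks. -/
def stirling : ℕ → ℕ → ℕ
  | 0, 0 => 1
  | 0, _ + 1 => 0
  | _ + 1, 0 => 0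
  | n + 1, k + 1 => (k + 1) * stirling n (k + 1) + stirling n k

lemma stirling_of_lt : ∀ {n k : ℕ}, n < k → stirling n k = 0
  | 0, _ + 1, _ => rfl
  | n + 1, k + 1, h => by
    have h1 : n < k := Nat.lt_of_succ_lt_succ h
    simp [stirling, stirling_of_lt h1, stirling_of_lt (Nat.lt_succ_of_lt h1)]

lemma stirling_self (n : ℕ) : stirling n n = 1 := by
  induction n with
  | zero => rfl
  | succ n ih => simp [stirling, ih, stirling_of_lt (Nat.lt_succ_self n)]

def MonoTrans {d m : ℕ} (s : Fin m → Fin d × Fin d) : Prop :=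
  (∀ i, (s i).1 < (s i).2) ∧ Monotone fun i => (s i).2

noncomputable def C (d m : ℕ) : ℕ :=
  Nat.card {s : Fin m → Fin d × Fin d // MonoTrans s}

lemma card_split {α : Type*} [Finite α] (P Q : α → Prop) :
    Nat.card {x // P x} =
      Nat.card {x // P x ∧ Q x} + Nat.card {x // P x ∧ ¬ Q x} := by
  classical
  rw [← Nat.card_sum]
  exact Nat.card_congr ((Equiv.sumCompl (fun x : {x // P x} => Q x.1)).symm.trans
    (Equiv.sumCongr (Equiv.subtypeSubtypeEquivSubtypeInter P Q)
      (Equiv.subtypeSubtypeEquivSubtypeInter P (fun x => ¬ Q x))))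

lemma C_zero (d : ℕ) : C d 0 = 1 := by
  have : Unique {s : Fin 0 → Fin d × Fin d // MonoTrans s} :=
    { default := ⟨finZeroElim, fun i => i.elim0, fun i => i.elim0⟩
      uniq := fun x => Subtype.ext (funext fun i => i.elim0) }
  exact Nat.card_unique

lemma C_one (m : ℕ) : C 1 (m + 1) = 0 := by
  have : IsEmpty {s : Fin (m + 1) → Fin 1 × Fin 1 // MonoTrans s} := by
    refine ⟨fun x => ?_⟩
    have h := x.2.1 0
    omega
  exact Nat.card_of_isEmpty

/-- Top case equivalence: last value equals the top element. -/
def equivTop (d m : ℕ) :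
    {s : Fin (m + 1) → Fin (d + 2) × Fin (d + 2) //
        MonoTrans s ∧ (s (Fin.last m)).2 = Fin.last (d + 1)} ≃
      {t : Fin m → Fin (d + 2) × Fin (d + 2) // MonoTrans t} × Fin (d + 1) where
  toFun s :=
    (⟨fun i => s.1 i.castSucc,
      fun i => s.2.1.1 _,
      fun i j hij => s.2.1.2 (Fin.castSucc_le_castSucc_iff.mpr hij)⟩,
     ((s.1 (Fin.last m)).1).castPred (by
        have h := s.2.1.1 (Fin.last m)
        rw [s.2.2] at h
        exact Fin.ne_last_of_lt h))
  invFun p :=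
    ⟨Fin.snoc p.1.1 (p.2.castSucc, Fin.last (d + 1)),
     ⟨⟨fun i => by
        induction i using Fin.lastCases with
        | last => rw [Fin.snoc_last]; exact Fin.castSucc_lt_last p.2
        | cast i => rw [Fin.snoc_castSucc]; exact p.1.2.1 i,
       fun i j hij => by
        induction j using Fin.lastCases with
        | last => simp only [Fin.snoc_last]; exact Fin.le_last _
        | cast j =>
          induction i using Fin.lastCases with
          | last => exact absurd hij (not_le.mpr (Fin.castSucc_lt_last j))
          | cast i =>
            simp only [Fin.snoc_castSucc]
            exact p.1.2.2 (Fin.castSucc_le_castSucc_iff.mp hij)⟩,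
      by rw [Fin.snoc_last]⟩⟩
  left_inv s := by
    refine Subtype.ext (funext fun i => ?_)
    induction i using Fin.lastCases with
    | last =>
      simp only [Fin.snoc_last]
      exact Prod.ext (Fin.castSucc_castPred _ _) s.2.2.symm
    | cast i => simp only [Fin.snoc_castSucc]
  right_inv p := by
    refine Prod.ext (Subtype.ext (funext fun i => ?_)) ?_
    · dsimp only
      exact Fin.snoc_castSucc _ _ i
    · simp only [Fin.snoc_last]
      exact Fin.castPred_castSucc _

/-- Non-top case equivalence: reduce the alphabet size. -/
def equivNotTop (d m : ℕ) :
    {s : Fin (m + 1) → Fin (d + 2) × Fin (d + 2) //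
        MonoTrans s ∧ ¬ (s (Fin.last m)).2 = Fin.last (d + 1)} ≃
      {t : Fin (m + 1) → Fin (d + 1) × Fin (d + 1) // MonoTrans t} where
  toFun s :=
    have h2 : ∀ i, (s.1 i).2 ≠ Fin.last (d + 1) := fun i =>
      Fin.ne_last_of_lt (lt_of_le_of_lt (s.2.1.2 (Fin.le_last i))
        (lt_of_le_of_ne (Fin.le_last _) s.2.2))
    have h1 : ∀ i, (s.1 i).1 ≠ Fin.last (d + 1) := fun i =>
      Fin.ne_last_of_lt (lt_of_lt_of_le (s.2.1.1 i) (Fin.le_last _))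
    ⟨fun i => (((s.1 i).1).castPred (h1 i), ((s.1 i).2).castPred (h2 i)),
     fun i => by
       have h := s.2.1.1 i
       rw [Fin.lt_def] at h ⊢
       simpa using h,
     fun i j hij => by
       have h := s.2.1.2 hij
       rw [Fin.le_def] at h ⊢
       simpa using h⟩
  invFun t :=
    ⟨fun i => (((t.1 i).1).castSucc, ((t.1 i).2).castSucc),
     ⟨fun i => Fin.castSucc_lt_castSucc_iff.mpr (t.2.1 i),
      fun i j hij => Fin.castSucc_le_castSucc_iff.mpr (t.2.2 hij)⟩,
     Fin.ne_last_of_lt (Fin.castSucc_lt_last _)⟩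
  left_inv s := by
    refine Subtype.ext (funext fun i => ?_)
    dsimp only
    exact Prod.ext (Fin.castSucc_castPred _ _) (Fin.castSucc_castPred _ _)
  right_inv t := by
    refine Subtype.ext (funext fun i => ?_)
    dsimp only
    exact Prod.ext (Fin.ext (by simp)) (Fin.ext (by simp))

lemma C_rec (d m : ℕ) :
    C (d + 2) (m + 1) = (d + 1) * C (d + 2) m + C (d + 1) (m + 1) := by
  rw [C, card_split MonoTrans (fun s => (s (Fin.last m)).2 = Fin.last (d + 1))]
  rw [Nat.card_congr (equivTop d m), Nat.card_congr (equivNotTop d m),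
    Nat.card_prod]
  rw [C, C, Nat.card_eq_fintype_card (α := Fin (d + 1)), Fintype.card_fin]
  ring

lemma C_eq : ∀ m d : ℕ, C (d + 1) m = stirling (d + m) d := by
  intro m
  induction m with
  | zero => intro d; simpa [stirling_self] using C_zero (d + 1)
  | succ m ihm =>
    intro d
    induction d with
    | zero =>
      rw [C_one]
      rfl
    | succ d ihd =>
      rw [C_rec d m, ihm (d + 1), ihd]
      have h1 : d + 1 + m = d + m + 1 := by omega
      have h2 : d + (m + 1) = d + m + 1 := by omega
      have h3 : d + 1 + (m + 1) = (d + m + 1) + 1 := by omega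
      rw [h1, h2, h3]
      rfl

/-- The number of monotone sequences of `m` transpositions in `S_d` equals the
Stirling number of the second kind `S(d + m - 1, d - 1)`, for `d ≥ 1`. -/
theorem count_monotone_transposition_sequences (d m : ℕ) (hd : 1 ≤ d) :
    Nat.card {s : Fin m → Fin d × Fin d //
        (∀ i, (s i).1 < (s i).2) ∧ Monotone fun i => (s i).2} =
      stirling (d + m - 1) (d - 1) := by
  obtain ⟨d, rfl⟩ : ∃ d', d = d' + 1 := ⟨d - 1, by omega⟩
  have h1 : d + 1 + m - 1 = d + m := by omega
  have h2 : d + 1 - 1 = d := by omega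
  rw [h1, h2]
  exact C_eq m d
end

section
/- Let a ≥ 1 and let Z(x,ℏ) = 1 + ∑_{k≥1} x^{ak}/(k! a^k ℏ^k) · ∏_{j=1}^{ak-1} 1/(1-jℏ), viewed as a formal power series in x with coefficients in the field of formal Laurent series ℚ((ℏ)). Then Z satisfies the differential equation [x^{a-1} + ∏_{j=0}^{a-1}(1 + x·ŷ + jℏ) · ŷ] Z = 0, where ŷ = -ℏ ∂/∂x acts by differentiation in x and x acts by multiplication, and the operator product is composition of operators. -/
/-!
Both operators act diagonally on monomials up to a shift: `ŷ xⁿ⁺¹ = -(n+1)ℏ xⁿ` and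
`(1 + xŷ + jℏ) xⁿ = (1 + (j - n)ℏ) xⁿ`. Comparing coefficients of `xⁿ`, only degrees
`n = ak + a - 1` carry nonzero terms, and there the equation is the recursion
`z_{ak} = a(k+1) ℏ ∏_{i<a} (1 - (ak+i)ℏ) z_{a(k+1)}` for the coefficients of `Z`,
which is the ratio of consecutive terms of its defining series.
-/

open PowerSeries

/-- The formal variable `ℏ`, as a Laurent series over `ℚ`. -/
noncomputable def hbar : LaurentSeries ℚ := HahnSeries.single 1 1

/-- The wave function `Z(x,ℏ) = 1 + ∑_{k≥1} x^{ak}/(k! a^k ℏ^k) ∏_{j=1}^{ak-1} 1/(1-jℏ)`,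
as a formal power series in `x` with coefficients in `ℚ((ℏ))`. -/
noncomputable def waveFunction (a : ℕ) : PowerSeries (LaurentSeries ℚ) :=
  PowerSeries.mk fun n =>
    if n = 0 then 1
    else if a ∣ n then
      (((n / a).factorial : LaurentSeries ℚ) * (a : LaurentSeries ℚ) ^ (n / a) *
          hbar ^ (n / a))⁻¹ *
        ∏ j ∈ Finset.range (n - 1), (1 - ((j : LaurentSeries ℚ) + 1) * hbar)⁻¹
    else 0

/-- The operator `ŷ = -ℏ ∂/∂x` acting on `ℚ((ℏ))[[x]]`. -/
noncomputable def yhat (f : PowerSeries (LaurentSeries ℚ)) : PowerSeries (LaurentSeries ℚ) :=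
  -(PowerSeries.C hbar) * f.derivativeFun

/-- The operator `1 + x·ŷ + jℏ` acting on `ℚ((ℏ))[[x]]`. -/
noncomputable def opFactor (j : ℕ) (f : PowerSeries (LaurentSeries ℚ)) :
    PowerSeries (LaurentSeries ℚ) :=
  f + PowerSeries.X * yhat f + PowerSeries.C ((j : LaurentSeries ℚ) * hbar) * f

open Finset

instance {K : Type*} [Field K] [CharZero K] : CharZero (LaurentSeries K) :=
  charZero_of_injective_algebraMap (algebraMap K _).injective

lemma hbar_ne_zero : hbar ≠ 0 := HahnSeries.single_ne_zero one_ne_zero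

lemma one_sub_natCast_mul_hbar_ne_zero (m : ℕ) : (1 : LaurentSeries ℚ) - m * hbar ≠ 0 := by
  intro h
  have := congrArg (HahnSeries.coeff · 0) h
  simp [hbar, ← nsmul_eq_mul] at this

lemma coeff_yhat (f : PowerSeries (LaurentSeries ℚ)) (n : ℕ) :
    coeff n (yhat f) = -hbar * (n + 1) * coeff (n + 1) f := by
  rw [yhat, neg_mul, map_neg, coeff_C_mul]
  erw [coeff_derivative]
  ring

lemma coeff_opFactor (j n : ℕ) (f : PowerSeries (LaurentSeries ℚ)) :
    coeff n (opFactor j f) = (1 + (j - n) * hbar) * coeff n f := by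
  rcases n with _ | n
  · simp only [opFactor, map_add, coeff_zero_X_mul, coeff_C_mul]
    push_cast
    ring
  · rw [opFactor, map_add, map_add, coeff_succ_X_mul, coeff_yhat, coeff_C_mul]
    push_cast
    ring

lemma coeff_foldr_opFactor (l : List ℕ) (n : ℕ) (f : PowerSeries (LaurentSeries ℚ)) :
    coeff n (l.foldr (fun j g => opFactor j ∘ g) id f) =
      (l.map fun j : ℕ => 1 + (j - n) * hbar).prod * coeff n f := by
  induction l with
  | nil => simp
  | cons j l ih => simp [coeff_opFactor, ih, mul_assoc]

noncomputable def waveDenom (a k : ℕ) : LaurentSeries ℚ :=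
  k.factorial * (a : LaurentSeries ℚ) ^ k * hbar ^ k * ∏ i ∈ range (a * k), (1 - i * hbar)

lemma prod_range_pred_one_sub_succ_mul_hbar {n : ℕ} (hn : n ≠ 0) :
    ∏ j ∈ range (n - 1), (1 - ((j : LaurentSeries ℚ) + 1) * hbar) =
      ∏ i ∈ range n, (1 - (i : LaurentSeries ℚ) * hbar) := by
  obtain ⟨m, rfl⟩ := Nat.exists_eq_succ_of_ne_zero hn
  simp [prod_range_succ']

lemma coeff_mul_waveFunction {a : ℕ} (ha : 1 ≤ a) (k : ℕ) :
    coeff (a * k) (waveFunction a) = (waveDenom a k)⁻¹ := by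
  rcases Nat.eq_zero_or_pos k with rfl | hk
  · simp [waveFunction, waveDenom]
  · have hak : a * k ≠ 0 := by positivity
    rw [waveFunction, coeff_mk, if_neg hak, if_pos (dvd_mul_right a k),
      Nat.mul_div_cancel_left k ha, prod_inv_distrib, prod_range_pred_one_sub_succ_mul_hbar hak,
      waveDenom]
    simp only [mul_inv]

lemma coeff_waveFunction_of_not_dvd {a n : ℕ} (h : ¬a ∣ n) : coeff n (waveFunction a) = 0 := by
  have hn : n ≠ 0 := by rintro rfl; exact h (dvd_zero a)
  simp [waveFunction, hn, h]

noncomputable def waveRatio (a k : ℕ) : LaurentSeries ℚ :=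
  (a * (k + 1) : ℕ) * hbar *
    ∏ i ∈ range a, (1 - ((a * k + i : ℕ) : LaurentSeries ℚ) * hbar)

lemma waveRatio_ne_zero {a : ℕ} (ha : 1 ≤ a) (k : ℕ) : waveRatio a k ≠ 0 :=
  mul_ne_zero (mul_ne_zero (Nat.cast_ne_zero.2 (by positivity)) hbar_ne_zero)
    (prod_ne_zero_iff.2 fun _ _ => one_sub_natCast_mul_hbar_ne_zero _)

lemma waveDenom_succ (a k : ℕ) : waveDenom a (k + 1) = waveDenom a k * waveRatio a k := by
  rw [waveDenom, waveDenom, waveRatio, Nat.mul_succ, prod_range_add, Nat.factorial_succ]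
  push_cast
  ring

lemma coeff_mul_waveFunction_eq_waveRatio_mul {a : ℕ} (ha : 1 ≤ a) (k : ℕ) :
    coeff (a * k) (waveFunction a) = waveRatio a k * coeff (a * (k + 1)) (waveFunction a) := by
  rw [coeff_mul_waveFunction ha, coeff_mul_waveFunction ha, waveDenom_succ, mul_inv,
    mul_left_comm, mul_inv_cancel₀ (waveRatio_ne_zero ha k), mul_one]

lemma prod_range_one_add_sub_mul_hbar_eq (a k : ℕ) :
    ((List.range a).map fun j : ℕ =>
        1 + ((j : LaurentSeries ℚ) - (a * k + (a - 1) : ℕ)) * hbar).prod =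
      ∏ i ∈ range a, (1 - ((a * k + i : ℕ) : LaurentSeries ℚ) * hbar) := by
  change ∏ j ∈ range a, _ = _
  rw [← prod_range_reflect]
  refine prod_congr rfl fun j hj => ?_
  have hja : j < a := mem_range.1 hj
  push_cast [Nat.cast_sub (show j ≤ a - 1 by omega), Nat.cast_sub (show 1 ≤ a by omega)]
  ring

/-- The quantum curve equation
`[x^{a-1} + ∏_{j=0}^{a-1}(1 + x·ŷ + jℏ) ∘ ŷ] Z = 0` for the monotone orbifold
Hurwitz wave function. -/
theorem quantum_curve (a : ℕ) (ha : 1 ≤ a) :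
    PowerSeries.X ^ (a - 1) * waveFunction a +
      ((List.range a).foldr (fun j g => opFactor j ∘ g) id) (yhat (waveFunction a)) = 0 := by
  ext n : 1
  rw [map_add, map_zero, coeff_X_pow_mul', coeff_foldr_opFactor, coeff_yhat]
  by_cases hdvd : a ∣ n + 1
  · obtain ⟨k, rfl⟩ : ∃ k, n = a * k + (a - 1) := by
      obtain ⟨m, hm⟩ := hdvd
      obtain ⟨k, rfl⟩ := Nat.exists_eq_succ_of_ne_zero (by rintro rfl; simp at hm : m ≠ 0)
      exact ⟨k, by rw [Nat.mul_succ] at hm; omega⟩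
    have hsucc : a * k + (a - 1) + 1 = a * (k + 1) := by rw [Nat.mul_succ]; omega
    have hsucc_cast : ((a * k + (a - 1) : ℕ) : LaurentSeries ℚ) + 1 = (a * (k + 1) : ℕ) := by
      rw [← hsucc, Nat.cast_succ]
    rw [if_pos (Nat.le_add_left _ _), Nat.add_sub_cancel, prod_range_one_add_sub_mul_hbar_eq,
      coeff_mul_waveFunction_eq_waveRatio_mul ha k, waveRatio, hsucc, hsucc_cast]
    ring
  · simp only [coeff_waveFunction_of_not_dvd hdvd, mul_zero, add_zero]
    split_ifs with hle
    · refine coeff_waveFunction_of_not_dvd fun h => hdvd ?_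
      rw [show n + 1 = n - (a - 1) + a by omega]
      exact h.add dvd_rfl
    · rfl
end

section
/- Fix a ≥ 1 and suppose power series φ_1,...,φ_a, ψ ∈ ℚ[[t]] with zero constant terms satisfy ψ = φ_1 + ... + φ_a and φ_ℓ = ψ·(φ_1 + ... + φ_ℓ) + δ_{ℓ,1}·t for ℓ = 1,...,a. Then φ_ℓ = ψ²·(1-ψ)^{a-ℓ} + δ_{1,ℓ}·t for every ℓ = 1,...,a, and consequently t = ψ·(1-ψ)^a. -/
/-!
Write `S ℓ = φ_1 + ⋯ + φ_ℓ`. For `ℓ ≥ 2` the system says `S ℓ - S (ℓ-1) = φ_ℓ = ψ · S ℓ`, i.e.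
`S (ℓ-1) = (1-ψ) · S ℓ`, and `S a = ψ`; hence `S ℓ = ψ (1-ψ)^{a-ℓ}` and `φ_ℓ = ψ · S ℓ + δ_{ℓ,1} t`.
The equation for `ℓ = 1` reads `S 1 = ψ · S 1 + t`, so `t = (1-ψ) · S 1 = ψ (1-ψ)^a`.
-/

open PowerSeries Finset

theorem eq_pow_mul_of_eq_mul_succ {M : Type*} [CommMonoid M] (S : ℕ → M) (c : M) {ℓ a : ℕ}
    (hℓa : ℓ ≤ a) (hstep : ∀ k, ℓ ≤ k → k < a → S k = c * S (k + 1)) :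
    S ℓ = c ^ (a - ℓ) * S a := by
  obtain ⟨d, rfl⟩ := Nat.exists_eq_add_of_le hℓa
  induction d generalizing ℓ with
  | zero => simp
  | succ d ih =>
    have htail := ih (ℓ := ℓ + 1) (by omega) fun k hk hka => hstep k (by omega) (by omega)
    rw [hstep ℓ le_rfl (by omega), htail, ← mul_assoc, ← pow_succ',
      show ℓ + 1 + d - (ℓ + 1) + 1 = ℓ + (d + 1) - ℓ by omega, show ℓ + 1 + d = ℓ + (d + 1) by omega]

theorem sum_Icc_one_eq_one_sub_mul_of_eq_mul {R : Type*} [CommRing R] (φ : ℕ → R) (ψ : R) (k : ℕ)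
    (h : φ (k + 1) = ψ * ∑ p ∈ Icc 1 (k + 1), φ p) :
    ∑ p ∈ Icc 1 k, φ p = (1 - ψ) * ∑ p ∈ Icc 1 (k + 1), φ p := by
  rw [sum_Icc_succ_top (by omega : 1 ≤ k + 1)] at h ⊢
  linear_combination -h

theorem genus_zero_system_general (a : ℕ) (ha : 1 ≤ a)
    (φ : ℕ → PowerSeries ℚ) (ψ : PowerSeries ℚ)
    (hψ : ψ = ∑ ℓ ∈ Finset.Icc 1 a, φ ℓ)
    (hsys : ∀ ℓ ∈ Finset.Icc 1 a,
      φ ℓ = ψ * (∑ p ∈ Finset.Icc 1 ℓ, φ p) +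
        (if ℓ = 1 then (PowerSeries.X : PowerSeries ℚ) else 0)) :
    (∀ ℓ ∈ Finset.Icc 1 a,
      φ ℓ = ψ ^ 2 * (1 - ψ) ^ (a - ℓ) +
        (if ℓ = 1 then (PowerSeries.X : PowerSeries ℚ) else 0)) ∧
    (PowerSeries.X : PowerSeries ℚ) = ψ * (1 - ψ) ^ a := by
  have hpartial : ∀ ℓ ∈ Icc 1 a, ∑ p ∈ Icc 1 ℓ, φ p = ψ * (1 - ψ) ^ (a - ℓ) := by
    intro ℓ hℓ
    rw [mem_Icc] at hℓ
    rw [eq_pow_mul_of_eq_mul_succ (fun ℓ => ∑ p ∈ Icc 1 ℓ, φ p) (1 - ψ) hℓ.2, ← hψ, mul_comm]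
    intro k hk hka
    refine sum_Icc_one_eq_one_sub_mul_of_eq_mul φ ψ k ?_
    simpa [show k ≠ 0 by omega] using hsys (k + 1) (mem_Icc.mpr ⟨by omega, hka⟩)
  have hone : (1 : ℕ) ∈ Icc 1 a := mem_Icc.mpr ⟨le_rfl, ha⟩
  refine ⟨fun ℓ hℓ => by rw [hsys ℓ hℓ, hpartial ℓ hℓ]; ring, ?_⟩
  have hφ1 : φ 1 = ψ * φ 1 + X := by simpa using hsys 1 hone
  have hS1 : φ 1 = ψ * (1 - ψ) ^ (a - 1) := by simpa using hpartial 1 hone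
  calc (X : PowerSeries ℚ) = (1 - ψ) * φ 1 := by linear_combination -hφ1
    _ = ψ * (1 - ψ) ^ (a - 1 + 1) := by rw [hS1]; ring
    _ = ψ * (1 - ψ) ^ a := by rw [Nat.sub_add_cancel ha]

/-- Solving the genus-zero one-point system: if `ψ = φ_1 + ⋯ + φ_a` and
`φ_ℓ = ψ·(φ_1 + ⋯ + φ_ℓ) + δ_{ℓ,1}·t` for `ℓ = 1, …, a`, then
`φ_ℓ = ψ²·(1-ψ)^{a-ℓ} + δ_{1,ℓ}·t` and consequently `t = ψ·(1-ψ)^a`. -/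
theorem genus_zero_system (a : ℕ) (ha : 1 ≤ a)
    (φ : ℕ → PowerSeries ℚ) (ψ : PowerSeries ℚ)
    (hφ0 : ∀ ℓ ∈ Finset.Icc 1 a, PowerSeries.constantCoeff (φ ℓ) = 0)
    (hψ0 : PowerSeries.constantCoeff ψ = 0)
    (hψ : ψ = ∑ ℓ ∈ Finset.Icc 1 a, φ ℓ)
    (hsys : ∀ ℓ ∈ Finset.Icc 1 a,
      φ ℓ = ψ * (∑ p ∈ Finset.Icc 1 ℓ, φ p) +
        (if ℓ = 1 then (PowerSeries.X : PowerSeries ℚ) else 0)) :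
    (∀ ℓ ∈ Finset.Icc 1 a,
      φ ℓ = ψ ^ 2 * (1 - ψ) ^ (a - ℓ) +
        (if ℓ = 1 then (PowerSeries.X : PowerSeries ℚ) else 0)) ∧
    (PowerSeries.X : PowerSeries ℚ) = ψ * (1 - ψ) ^ a :=
  genus_zero_system_general a ha φ ψ hψ hsys
end

section
/- Let σ be a permutation of {1,...,d} and let K^•_{m,μ}(σ) denote the number of sequences (σ_1,...,σ_m) of transpositions in S_d that form a monotone sequence (writing σ_i = (r_i s_i) with r_i < s_i, one has s_1 ≤ ... ≤ s_m) such that σσ_1⋯σ_m has cycle type μ. Then K^•_{m,μ}(σ) depends only on the cycle type of σ: if σ and σ' are conjugate in S_d, then K^•_{m,μ}(σ) = K^•_{m,μ}(σ'). -/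
/-!
Summed in the group algebra `ℤ[S_d]`, the products `σ₁ ⋯ σₘ` of the monotone sequences give the
complete homogeneous polynomial `hₘ(J₀, …, J_{d-1})` in the Jucys–Murphy elements
`J_t = ∑_{r < t} (r t)` (group the sequences by the position of the last transposition).
The `J_t` commute pairwise, and an adjacent transposition `s = (a a+1)` commutes with every
`J_t` except `J_a` and `J_{a+1}`, for which `s J_a s = J_{a+1} - s`; hence `s` commutes with
`J_a + J_{a+1}` and `J_a J_{a+1}`, and therefore with `hₘ`. Adjacent transpositions generate
`S_d`, so this sum `X` is central. The count for `σ` is the total coefficient of `σ X` on the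
permutations of cycle type `μ`, and centrality makes it invariant under conjugating `σ`.
-/

open Equiv Finset

section OrderedHsymm

variable {R : Type*} [Semiring R]

/-- `orderedHsymm v m t = ∑ v i₁ * ⋯ * v iₘ` over `i₁ ≤ ⋯ ≤ iₘ < t`, grouped by the last index. -/
def orderedHsymm (v : ℕ → R) : ℕ → ℕ → R
  | 0, _ => 1
  | m + 1, t => ∑ u ∈ range t, orderedHsymm v m (u + 1) * v u

@[simp] lemma orderedHsymm_zero (v : ℕ → R) (t : ℕ) : orderedHsymm v 0 t = 1 := rfl

lemma orderedHsymm_succ (v : ℕ → R) (m t : ℕ) :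
    orderedHsymm v (m + 1) t = ∑ u ∈ range t, orderedHsymm v m (u + 1) * v u := rfl

@[simp] lemma orderedHsymm_succ_zero (v : ℕ → R) (m : ℕ) : orderedHsymm v (m + 1) 0 = 0 := rfl

lemma orderedHsymm_succ_succ (v : ℕ → R) (m t : ℕ) :
    orderedHsymm v (m + 1) (t + 1) = orderedHsymm v (m + 1) t + orderedHsymm v m (t + 1) * v t :=
  sum_range_succ _ _

lemma orderedHsymm_one (v : ℕ → R) (m : ℕ) : orderedHsymm v m 1 = v 0 ^ m := by
  induction m with
  | zero => exact (pow_zero _).symm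
  | succ m ih => rw [orderedHsymm_succ, sum_range_one, ih, pow_succ]

lemma commute_orderedHsymm {a : R} {v : ℕ → R} {t : ℕ} (hv : ∀ u < t, Commute a (v u))
    (m : ℕ) : Commute a (orderedHsymm v m t) := by
  induction m generalizing t with
  | zero => exact Commute.one_right a
  | succ m ih =>
    refine Commute.sum_right _ _ _ fun u hu => ?_
    have hut := mem_range.1 hu
    exact (ih fun w hw => hv w (by omega)).mul_right (hv u hut)

lemma orderedHsymm_add (v : ℕ → R) (t₁ : ℕ) (m t₂ : ℕ) :
    orderedHsymm v m (t₁ + t₂) =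
      ∑ q ∈ antidiagonal m, orderedHsymm v q.1 t₁ * orderedHsymm (fun u => v (t₁ + u)) q.2 t₂ := by
  induction m generalizing t₂ with
  | zero => simp
  | succ m ihm =>
    induction t₂ with
    | zero =>
      rw [Nat.antidiagonal_succ', sum_cons, sum_map]
      simp
    | succ t₂ iht =>
      rw [← add_assoc, orderedHsymm_succ_succ, iht, add_assoc, ihm, Nat.antidiagonal_succ',
        sum_cons, sum_cons, sum_map, sum_map, sum_mul]
      simp only [orderedHsymm_zero, mul_one, Function.Embedding.coe_prodMap,
        Function.Embedding.coeFn_mk, Prod.map_fst, Prod.map_snd, Function.Embedding.refl_apply,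
        Nat.succ_eq_add_one, orderedHsymm_succ_succ, mul_add, sum_add_distrib, mul_assoc,
        add_assoc]

lemma orderedHsymm_two_add_two (v : ℕ → R) (hv : Commute (v 0) (v 1)) (p : ℕ) :
    orderedHsymm v (p + 2) 2 + v 0 * v 1 * orderedHsymm v p 2 =
      (v 0 + v 1) * orderedHsymm v (p + 1) 2 := by
  have hcomm : ∀ q, Commute (v 1) (orderedHsymm v q 2) :=
    commute_orderedHsymm fun u hu => by
      interval_cases u
      exacts [hv.symm, Commute.refl _]
  have hrec : ∀ q, orderedHsymm v (q + 1) 2 = v 0 ^ (q + 1) + orderedHsymm v q 2 * v 1 := by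
    intro q
    rw [orderedHsymm_succ_succ, orderedHsymm_one]
  calc orderedHsymm v (p + 1 + 1) 2 + v 0 * v 1 * orderedHsymm v p 2
      = v 0 ^ (p + 2) + orderedHsymm v (p + 1) 2 * v 1 + v 0 * (orderedHsymm v p 2 * v 1) := by
        rw [hrec (p + 1), mul_assoc, (hcomm p).eq]
    _ = v 0 * (v 0 ^ (p + 1) + orderedHsymm v p 2 * v 1) + v 1 * orderedHsymm v (p + 1) 2 := by
        rw [mul_add, ← pow_succ', (hcomm (p + 1)).eq]
        abel
    _ = (v 0 + v 1) * orderedHsymm v (p + 1) 2 := by rw [← hrec, add_mul]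

end OrderedHsymm


section TwoVariables

variable {R : Type*} [Ring R]

lemma commute_add_and_commute_mul_of_mul_mul_eq_sub {s x y : R} (hs : s * s = 1)
    (h : s * x * s = y - s) (hxy : Commute x y) : Commute s (x + y) ∧ Commute s (x * y) := by
  have hx : s * x = y * s - 1 := calc
    s * x = s * x * s * s := by rw [mul_assoc _ s s, hs, mul_one]
    _ = y * s - 1 := by rw [h, sub_mul, hs]
  have hy : s * y = x * s + 1 := calc
    s * y = s * (s * x * s + s) := by rw [h, sub_add_cancel]
    _ = x * s + 1 := by simp only [mul_add, ← mul_assoc, hs, one_mul]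
  refine ⟨?_, ?_⟩
  · change s * (x + y) = (x + y) * s
    rw [mul_add, hx, hy, add_mul]
    abel
  · change s * (x * y) = x * y * s
    rw [← mul_assoc, hx, sub_mul, mul_assoc, hy, hxy.eq]
    noncomm_ring

lemma commute_orderedHsymm_two {s : R} {v : ℕ → R} (hv : Commute (v 0) (v 1))
    (hadd : Commute s (v 0 + v 1)) (hmul : Commute s (v 0 * v 1)) (p : ℕ) :
    Commute s (orderedHsymm v p 2) := by
  suffices ∀ p, Commute s (orderedHsymm v p 2) ∧ Commute s (orderedHsymm v (p + 1) 2) from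
    (this p).1
  intro p
  induction p with
  | zero =>
    refine ⟨Commute.one_right s, ?_⟩
    simpa [orderedHsymm_succ, sum_range_succ] using hadd
  | succ p ih =>
    refine ⟨ih.2, ?_⟩
    rw [eq_sub_of_add_eq (orderedHsymm_two_add_two v hv p)]
    exact (hadd.mul_right ih.2).sub_right (hmul.mul_right ih.1)

end TwoVariables

namespace MonoidAlgebra

variable (k : Type*) [Semiring k]

lemma sum_coeff_sum_of_eq_card {G ι : Type*} [Monoid G] [DecidableEq G] (S : Finset ι)
    (w : ι → G) (T : Finset G) :
    ∑ π ∈ T, (∑ i ∈ S, of k G (w i)).coeff π = #{i ∈ S | w i ∈ T} := by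
  simp only [coeff_sum, of_apply, coeff_single, Finsupp.finsetSum_apply, Finsupp.single_apply]
  rw [sum_comm]
  simp [sum_boole]

variable {k}

lemma sum_coeff_of_conj_mul {G : Type*} [Group G] {X : MonoidAlgebra k G}
    (hX : ∀ g, Commute (of k G g) X) {T : Finset G} (hT : ∀ g π, g * π * g⁻¹ ∈ T ↔ π ∈ T)
    (σ τ : G) :
    ∑ π ∈ T, (of k G (τ * σ * τ⁻¹) * X).coeff π = ∑ π ∈ T, (of k G σ * X).coeff π := by
  have hconj : of k G (τ * σ * τ⁻¹) * X = of k G τ * (of k G σ * X) * of k G τ⁻¹ := by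
    rw [map_mul, map_mul, mul_assoc _ _ X, (hX τ⁻¹).eq, mul_assoc, mul_assoc, mul_assoc]
  refine sum_equiv (MulAut.conj τ⁻¹).toEquiv (fun π => ?_) fun π _ => ?_
  · simpa using (hT τ⁻¹ π).symm
  · rw [hconj]
    simp [mul_assoc]

end MonoidAlgebra

section JucysMurphy

open MonoidAlgebra

variable (k : Type*) [Ring k]

lemma of_mul_sum_swap_mul_of_inv {α : Type*} [Fintype α] [DecidableEq α] (g : Perm α)
    (P : α × α → Prop) [DecidablePred P] :
    of k _ g * (∑ p : α × α with P p, of k _ (swap p.1 p.2)) * of k _ g⁻¹ =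
      ∑ p : α × α with P (g⁻¹ p.1, g⁻¹ p.2), of k _ (swap p.1 p.2) := by
  simp only [sum_filter, mul_sum, sum_mul]
  refine Fintype.sum_equiv (g.prodCongr g) _ _ fun p => ?_
  split_ifs <;> simp_all [swap_apply_apply]

variable (d : ℕ)

/-- The Jucys–Murphy element `J t = ∑_{r < t} (r t)`; it is `0` for `t ≥ d`. -/
noncomputable def jucysMurphy (t : ℕ) : MonoidAlgebra k (Perm (Fin d)) :=
  ∑ p : Fin d × Fin d with p.1 < p.2 ∧ (p.2 : ℕ) = t, of k _ (swap p.1 p.2)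

variable {k d}

lemma of_swap_mul_self {α : Type*} [DecidableEq α] (u v : α) :
    of k _ (swap u v) * of k _ (swap u v) = 1 := by
  rw [← map_mul, swap_mul_self, map_one]

lemma commute_swap_jucysMurphy {u v : Fin d} {t : ℕ} (hu : (u : ℕ) ≠ t) (hv : (v : ℕ) ≠ t)
    (huv : (u : ℕ) < t ↔ (v : ℕ) < t) : Commute (of k _ (swap u v)) (jucysMurphy k d t) := by
  have hswap : ∀ x : Fin d, ((swap u v x : ℕ) < t ↔ (x : ℕ) < t) ∧
      ((swap u v x : ℕ) = t ↔ (x : ℕ) = t) := by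
    intro x
    rw [swap_apply_def]
    split_ifs <;> subst_vars <;> omega
  have hconj : of k _ (swap u v) * jucysMurphy k d t * of k _ (swap u v) = jucysMurphy k d t := by
    have := of_mul_sum_swap_mul_of_inv k (swap u v) fun p : Fin d × Fin d =>
      p.1 < p.2 ∧ (p.2 : ℕ) = t
    rw [swap_inv] at this
    rw [jucysMurphy, this]
    refine sum_congr (filter_congr fun p _ => ?_) fun _ _ => rfl
    simp only [Fin.lt_def]
    have h₁ := hswap p.1
    have h₂ := hswap p.2
    omega
  calc of k _ (swap u v) * jucysMurphy k d t
      = of k _ (swap u v) * jucysMurphy k d t * of k _ (swap u v) * of k _ (swap u v) := by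
        rw [mul_assoc _ (of k _ _), of_swap_mul_self, mul_one]
    _ = jucysMurphy k d t * of k _ (swap u v) := by rw [hconj]

lemma jucysMurphy_commute (s t : ℕ) : Commute (jucysMurphy k d s) (jucysMurphy k d t) := by
  wlog hst : s < t generalizing s t
  · obtain rfl | hts := (not_lt.1 hst).eq_or_lt
    · exact Commute.refl _
    · exact (this t s hts).symm
  refine Commute.sum_left _ _ _ fun p hp => ?_
  have hlt := Fin.lt_def.1 (mem_filter.1 hp).2.1
  have heq := (mem_filter.1 hp).2.2
  exact commute_swap_jucysMurphy (by omega) (by omega) (by omega)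

lemma swap_mul_jucysMurphy_mul_swap {a b : Fin d} (hab : (b : ℕ) = a + 1) :
    of k _ (swap a b) * jucysMurphy k d a * of k _ (swap a b) =
      jucysMurphy k d b - of k _ (swap a b) := by
  have hconj := of_mul_sum_swap_mul_of_inv k (swap a b) fun p : Fin d × Fin d =>
    p.1 < p.2 ∧ (p.2 : ℕ) = a
  rw [swap_inv] at hconj
  dsimp only at hconj
  have hpairs : univ.filter (fun p : Fin d × Fin d => p.1 < p.2 ∧ (p.2 : ℕ) = b) =
      insert (a, b)
        (univ.filter fun p => swap a b p.1 < swap a b p.2 ∧ (swap a b p.2 : ℕ) = a) := by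
    ext ⟨x, y⟩
    simp only [mem_insert, mem_filter, mem_univ, true_and, Prod.mk.injEq, Fin.lt_def, Fin.ext_iff]
    rw [swap_apply_def, swap_apply_def]
    split_ifs <;> simp only [Fin.ext_iff, and_true] at * <;> omega
  rw [jucysMurphy, hconj, eq_sub_iff_add_eq, jucysMurphy, hpairs, sum_insert, add_comm]
  simp only [mem_filter, swap_apply_left, swap_apply_right, not_and]
  omega

end JucysMurphy

section Centrality

open MonoidAlgebra

variable {k : Type*} [Ring k] {d : ℕ}

lemma commute_swap_orderedHsymm_jucysMurphy {a b : Fin d} (hab : (b : ℕ) = a + 1) (m : ℕ) :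
    Commute (of k _ (swap a b)) (orderedHsymm (jucysMurphy k d) m d) := by
  -- split the variables into `J_u` for `u < a`, the pair `J_a, J_b`, and `J_u` for `u > b`
  have hd : orderedHsymm (jucysMurphy k d) m d =
      orderedHsymm (jucysMurphy k d) m (a + (2 + (d - a - 2))) := by
    congr 1
    omega
  rw [hd, orderedHsymm_add]
  refine Commute.sum_right _ _ _ fun q _ => Commute.mul_right ?_ ?_
  · exact commute_orderedHsymm (fun u hu => commute_swap_jucysMurphy (by omega) (by omega)
      (by omega)) _
  rw [orderedHsymm_add]
  refine Commute.sum_right _ _ _ fun r _ => Commute.mul_right ?_ ?_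
  · have hconj := swap_mul_jucysMurphy_mul_swap (k := k) hab
    obtain ⟨hadd, hmul⟩ := commute_add_and_commute_mul_of_mul_mul_eq_sub (of_swap_mul_self a b)
      hconj (jucysMurphy_commute _ _)
    refine commute_orderedHsymm_two (v := fun u => jucysMurphy k d (a + u)) ?_ ?_ ?_ _ <;>
      simp only [add_zero, ← hab]
    exacts [jucysMurphy_commute _ _, hadd, hmul]
  · exact commute_orderedHsymm (fun u hu => commute_swap_jucysMurphy (by omega) (by omega)
      (by omega)) _

lemma commute_of_orderedHsymm_jucysMurphy (m : ℕ) (g : Perm (Fin d)) :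
    Commute (of k _ g) (orderedHsymm (jucysMurphy k d) m d) := by
  cases d with
  | zero => rw [Subsingleton.elim g 1, map_one]; exact Commute.one_left _
  | succ n =>
    have hg : g ∈ Submonoid.closure (Set.range fun i : Fin n => swap i.castSucc i.succ) := by
      rw [Perm.mclosure_swap_castSucc_succ]; trivial
    induction hg using Submonoid.closure_induction with
    | mem _ h =>
      obtain ⟨i, rfl⟩ := h
      exact commute_swap_orderedHsymm_jucysMurphy (by simp) m
    | one => rw [map_one]; exact Commute.one_left _
    | mul _ _ _ _ hg hh => rw [map_mul]; exact hg.mul_left hh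

end Centrality

section MonotoneSequences

variable {α : Type*} [DecidableEq α]

def swapProd {m : ℕ} (s : Fin m → α × α) : Perm α :=
  (List.ofFn fun i => swap (s i).1 (s i).2).prod

lemma swapProd_snoc {m : ℕ} (s : Fin m → α × α) (p : α × α) :
    swapProd (Fin.snoc s p : Fin (m + 1) → α × α) = swapProd s * swap p.1 p.2 := by
  simp only [swapProd, List.ofFn_succ', List.prod_concat, Fin.snoc_castSucc, Fin.snoc_last]

lemma Fin.monotone_snoc_iff {β : Type*} [Preorder β] {n : ℕ} {f : Fin n → β} {c : β} :
    Monotone (Fin.snoc f c : Fin (n + 1) → β) ↔ Monotone f ∧ ∀ i, f i ≤ c := by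
  refine ⟨fun h => ⟨fun i j hij => ?_, fun i => ?_⟩, fun ⟨hf, hc⟩ i j hij => ?_⟩
  · simpa using h (Fin.castSucc_le_castSucc_iff.2 hij)
  · simpa using h (Fin.le_last (Fin.castSucc i))
  · induction j using Fin.lastCases with
    | last =>
      induction i using Fin.lastCases with
      | last => exact le_rfl
      | cast i => simpa using hc i
    | cast j =>
      induction i using Fin.lastCases with
      | last => exact absurd hij (Fin.castSucc_lt_last j).not_ge
      | cast i => simpa using hf (Fin.castSucc_le_castSucc_iff.1 hij)

open Classical in
noncomputable def monotoneSeqs (d m t : ℕ) : Finset (Fin m → Fin d × Fin d) :=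
  {s | (∀ i, (s i).1 < (s i).2) ∧ Monotone (fun i => (s i).2) ∧ ∀ i, ((s i).2 : ℕ) < t}

lemma mem_monotoneSeqs {d m t : ℕ} {s : Fin m → Fin d × Fin d} :
    s ∈ monotoneSeqs d m t ↔
      (∀ i, (s i).1 < (s i).2) ∧ Monotone (fun i => (s i).2) ∧ ∀ i, ((s i).2 : ℕ) < t := by
  simp [monotoneSeqs]

lemma snoc_mem_monotoneSeqs {d m t : ℕ} {s : Fin m → Fin d × Fin d} {p : Fin d × Fin d} :
    (Fin.snoc s p : Fin (m + 1) → Fin d × Fin d) ∈ monotoneSeqs d (m + 1) t ↔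
      s ∈ monotoneSeqs d m (p.2 + 1) ∧ p.1 < p.2 ∧ (p.2 : ℕ) < t := by
  have hsnd : (fun i => ((Fin.snoc s p : Fin (m + 1) → Fin d × Fin d) i).2) =
      Fin.snoc (fun i => (s i).2) p.2 := Fin.comp_snoc Prod.snd s p
  simp only [mem_monotoneSeqs, hsnd, Fin.monotone_snoc_iff, Fin.forall_fin_succ',
    Fin.snoc_castSucc, Fin.snoc_last, Fin.le_def, Nat.lt_succ_iff]
  constructor
  · rintro ⟨⟨hlt, hp⟩, ⟨hmono, hle⟩, -, ht⟩
    exact ⟨⟨hlt, hmono, hle⟩, hp, ht⟩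
  · rintro ⟨⟨hlt, hmono, hle⟩, hp, ht⟩
    exact ⟨⟨hlt, hp⟩, ⟨hmono, hle⟩, fun i => (hle i).trans_lt ht, ht⟩

end MonotoneSequences

section GeneratingIdentity

open MonoidAlgebra

variable (k : Type*) [Ring k]

lemma sum_monotoneSeqs (d m t : ℕ) :
    ∑ s ∈ monotoneSeqs d m t, of k _ (swapProd s) = orderedHsymm (jucysMurphy k d) m t := by
  induction m generalizing t with
  | zero =>
    have : monotoneSeqs d 0 t = univ :=
      eq_univ_of_forall fun s => mem_monotoneSeqs.2 ⟨finZeroElim, fun i => i.elim0, finZeroElim⟩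
    rw [this, Fintype.sum_unique]
    simp only [swapProd, List.ofFn_zero, List.prod_nil, map_one, orderedHsymm_zero]
  | succ m ih =>
    calc ∑ s ∈ monotoneSeqs d (m + 1) t, of k _ (swapProd s)
        = ∑ q : (Fin d × Fin d) × (Fin m → Fin d × Fin d),
            if (Fin.snoc q.2 q.1 : Fin (m + 1) → Fin d × Fin d) ∈ monotoneSeqs d (m + 1) t then
              of k _ (swapProd (Fin.snoc q.2 q.1 : Fin (m + 1) → Fin d × Fin d)) else 0 := by
          rw [← Fintype.sum_ite_mem]
          exact ((Fin.snocEquiv fun _ => Fin d × Fin d).sum_comp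
            (fun s => if s ∈ monotoneSeqs d (m + 1) t then of k _ (swapProd s) else 0)).symm
      _ = ∑ p : Fin d × Fin d, if p.1 < p.2 ∧ (p.2 : ℕ) < t then
            orderedHsymm (jucysMurphy k d) m (p.2 + 1) * of k _ (swap p.1 p.2) else 0 := by
          rw [Fintype.sum_prod_type]
          refine sum_congr rfl fun p _ => ?_
          simp only [snoc_mem_monotoneSeqs, swapProd_snoc, map_mul]
          split_ifs with hp
          · simp [hp, ← ih, sum_mul]
          · simp [hp]
      _ = ∑ u ∈ range t, orderedHsymm (jucysMurphy k d) m (u + 1) * jucysMurphy k d u := by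
          simp only [jucysMurphy, mul_sum, sum_filter]
          rw [sum_comm]
          refine sum_congr rfl fun p _ => ?_
          by_cases hp : p.1 < p.2 <;> simp [hp, eq_comm]
      _ = orderedHsymm (jucysMurphy k d) (m + 1) t := rfl

end GeneratingIdentity

open MonoidAlgebra in
lemma natCard_monotone_cycleType_eq_sum_coeff (d m : ℕ) (μ : Multiset ℕ) (σ : Perm (Fin d)) :
    (Nat.card {s : Fin m → Fin d × Fin d //
        (∀ i, (s i).1 < (s i).2) ∧ (Monotone fun i => (s i).2) ∧
        (σ * (List.ofFn fun i => swap (s i).1 (s i).2).prod).cycleType = μ} : ℤ) =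
      ∑ π : Perm (Fin d) with π.cycleType = μ,
        (of ℤ _ σ * orderedHsymm (jucysMurphy ℤ d) m d).coeff π := by
  simp only [← sum_monotoneSeqs, mul_sum, ← map_mul, sum_coeff_sum_of_eq_card]
  rw [Nat.card_eq_fintype_card, Fintype.card_subtype]
  congr 2
  ext s
  simp [mem_monotoneSeqs, swapProd, and_assoc]

/-- The number of monotone sequences of `m` transpositions `σ_1, …, σ_m` in `S_d`
such that `σσ_1⋯σ_m` has cycle type `μ` depends only on the cycle type of `σ`:
conjugate permutations yield equal counts. -/
theorem monotone_count_depends_only_on_cycle_type (d m : ℕ) (μ : Multiset ℕ)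
    (σ σ' : Equiv.Perm (Fin d)) (hconj : IsConj σ σ') :
    Nat.card {s : Fin m → Fin d × Fin d //
        (∀ i, (s i).1 < (s i).2) ∧ (Monotone fun i => (s i).2) ∧
        (σ * (List.ofFn fun i => Equiv.swap (s i).1 (s i).2).prod).cycleType = μ} =
      Nat.card {s : Fin m → Fin d × Fin d //
        (∀ i, (s i).1 < (s i).2) ∧ (Monotone fun i => (s i).2) ∧
        (σ' * (List.ofFn fun i => Equiv.swap (s i).1 (s i).2).prod).cycleType = μ} := by
  obtain ⟨τ, rfl⟩ := isConj_iff.1 hconj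
  rw [← Nat.cast_inj (R := ℤ), natCard_monotone_cycleType_eq_sum_coeff,
    natCard_monotone_cycleType_eq_sum_coeff]
  refine (MonoidAlgebra.sum_coeff_of_conj_mul (commute_of_orderedHsymm_jucysMurphy m)
    (fun g π => ?_) σ τ).symm
  simp [Perm.cycleType_conj]
end

section
/- For any k ≥ 1 and a ≥ 1, x^{a-1}·Z(x,ℏ) = ∑_{k≥1} x^{ak-1}/((k-1)! a^{k-1} ℏ^{k-1}) · ∏_{j=1}^{ak-a-1} 1/(1-jℏ), where Z(x,ℏ) = 1 + ∑_{k≥1} x^{ak}/(k! a^k ℏ^k) ∏_{j=1}^{ak-1} 1/(1-jℏ). -/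
open PowerSeries

/-- `x^{a-1}·Z(x,ℏ) = ∑_{k≥1} x^{ak-1}/((k-1)! a^{k-1} ℏ^{k-1}) ∏_{j=1}^{ak-a-1} 1/(1-jℏ)`
in `ℚ((ℏ))[[x]]`.  The right-hand side is written as the power series whose coefficient of
`x^n` vanishes unless `n = ak - 1` for some `k ≥ 1` (i.e. `a ∣ n + 1`), in which case it is
the displayed expression with `k = (n+1)/a` (note `ak - a - 1 = n - a`). -/
theorem xpow_mul_waveFunction (a : ℕ) (ha : 1 ≤ a) :
    PowerSeries.X ^ (a - 1) * waveFunction a =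
      PowerSeries.mk fun n =>
        if a ∣ n + 1 then
          ((((n + 1) / a - 1).factorial : LaurentSeries ℚ) *
              (a : LaurentSeries ℚ) ^ ((n + 1) / a - 1) * hbar ^ ((n + 1) / a - 1))⁻¹ *
            ∏ j ∈ Finset.range (n - a), (1 - ((j : LaurentSeries ℚ) + 1) * hbar)⁻¹
        else 0 := by
  ext n
  rw [PowerSeries.coeff_mk, mul_comm, PowerSeries.coeff_mul_X_pow']
  by_cases hn : a - 1 ≤ n
  · rw [if_pos hn, waveFunction, PowerSeries.coeff_mk]
    have hna : n + 1 = (n - (a - 1)) + a := by omega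
    by_cases hm : n - (a - 1) = 0
    · have hn' : n = a - 1 := by omega
      have hd : a ∣ n + 1 := by
        have : n + 1 = a := by omega
        rw [this]
      rw [if_pos hm, if_pos hd]
      have h1 : (n + 1) / a = 1 := by
        have : n + 1 = a := by omega
        rw [this, Nat.div_self (by omega)]
      have h0 : n - a = 0 := by omega
      simp [h1, h0]
    · rw [if_neg hm]
      by_cases hd : a ∣ n - (a - 1)
      · have hd' : a ∣ n + 1 := by rw [hna]; exact dvd_add hd dvd_rfl
        rw [if_pos hd, if_pos hd']
        have h1 : (n + 1) / a - 1 = (n - (a - 1)) / a := by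
          rw [hna, Nat.add_div_right _ (by omega)]
          simp
        have h2 : n - (a - 1) - 1 = n - a := by omega
        rw [h2, h1]
      · have hd' : ¬ a ∣ n + 1 := by
          intro h
          apply hd
          have := Nat.dvd_sub h (dvd_refl a)
          have he : n + 1 - a = n - (a - 1) := by omega
          rwa [he] at this
        rw [if_neg hd, if_neg hd']
  · rw [if_neg hn, if_neg]
    intro hd
    have := Nat.le_of_dvd (by omega) hd
    omega
end
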